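/- arXiv:1605.09329 — 3 statements merged into one kernel-verified Lean document; each statement's English description precedes it below -/
import Mathlib

section
/- Let P_t solve the matrix Riccati equation ∂_t P_t = A P_t + P_t Aᵀ − P_t S P_t + R on symmetric positive semi-definite r×r matrices, where S is positive definite and R positive semi-definite. Then the trace satisfies the differential inequality ∂_t tr(P_t) ≤ 2μ(A)·tr(P_t) − (λ_min(S)/r)·(tr P_t)² + tr(R). Consequently tr(P_t) ≤ g_t + e^{2μ(A)t}(tr(P_0) − g_0), where g_t solves the scalar Riccati equation ∂_t g_t = 2μ(A) g_t − (λ_min(S)/r) g_t² + tr(R) with g_0 = tr(P_0). -/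
open Matrix MeasureTheory Real
open scoped ENNReal

noncomputable section

/-- The symmetric part `(A + Aᵀ)/2` of a square real matrix. -/
def symmPart {r : ℕ} (A : Matrix (Fin r) (Fin r) ℝ) : Matrix (Fin r) (Fin r) ℝ :=
  (1 / 2 : ℝ) • (A + Aᵀ)

lemma symmPart_isHermitian {r : ℕ} (A : Matrix (Fin r) (Fin r) ℝ) :
    (symmPart A).IsHermitian := by
  unfold symmPart Matrix.IsHermitian
  ext i j
  simp [Matrix.conjTranspose_apply, Matrix.smul_apply, Matrix.add_apply,
    Matrix.transpose_apply]
  ring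

/-- The largest eigenvalue of a Hermitian real matrix. -/
def lambdaMax {n : Type*} [Fintype n] [DecidableEq n] {A : Matrix n n ℝ}
    (hA : A.IsHermitian) : ℝ := ⨆ i, hA.eigenvalues i

/-- The smallest eigenvalue of a Hermitian real matrix. -/
def lambdaMin {n : Type*} [Fintype n] [DecidableEq n] {A : Matrix n n ℝ}
    (hA : A.IsHermitian) : ℝ := ⨅ i, hA.eigenvalues i

/-- The logarithmic norm `μ(A) = λ_max((A + Aᵀ)/2)` of a square real matrix. -/
def logNorm {r : ℕ} (A : Matrix (Fin r) (Fin r) ℝ) : ℝ :=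
  lambdaMax (symmPart_isHermitian A)

/-- The operator norm of a square real matrix, induced by the Euclidean norm. -/
def opNorm {r : ℕ} (A : Matrix (Fin r) (Fin r) ℝ) : ℝ :=
  ‖(Matrix.toEuclideanCLM (𝕜 := ℝ) (n := Fin r) A :
      EuclideanSpace ℝ (Fin r) →L[ℝ] EuclideanSpace ℝ (Fin r))‖

/-- The Frobenius norm `‖A‖_F = √(tr(AᵀA))` of a square real matrix. -/
def frobNorm {r : ℕ} (A : Matrix (Fin r) (Fin r) ℝ) : ℝ :=
  Real.sqrt (Matrix.trace (Aᵀ * A))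

/-! Taking the trace of the Riccati equation, the drift satisfies
`tr (A P + P Aᵀ) = 2 tr (symmPart A * P) ≤ 2 μ(A) tr P` and the damping satisfies
`tr (P S P) ≥ λ_min(S) tr (P²) ≥ λ_min(S) (tr P)² / r`, the last step by Cauchy–Schwarz on the
diagonal. For the comparison, the scalar Riccati field is concave, so the gap `h = tr P - g`
satisfies `h' ≤ a(t) h` with `a` the slope of the field at `g`, and `h(0) = 0`; the integrating
factor `exp (-∫ a)` makes `exp (-∫ a) * h` nonincreasing, hence `h ≤ 0` for `t ≥ 0`. -/

namespace Matrix

variable {n : Type*} [Fintype n]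

theorem PosSemidef.trace_mul_nonneg {M N : Matrix n n ℝ} (hM : M.PosSemidef)
    (hN : N.PosSemidef) : 0 ≤ (M * N).trace := by
  classical
  open scoped MatrixOrder in
  obtain ⟨B, rfl⟩ := CStarAlgebra.nonneg_iff_eq_star_mul_self.mp hN.nonneg
  rw [star_eq_conjTranspose, ← mul_assoc, trace_mul_comm, ← mul_assoc]
  exact (hM.mul_mul_conjTranspose_same B).trace_nonneg

theorem sq_trace_div_card_le_trace_transpose_mul_self (P : Matrix n n ℝ) :
    P.trace ^ 2 / Fintype.card n ≤ (Pᵀ * P).trace := by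
  have hsum : (Pᵀ * P).trace = ∑ i, ∑ j, P j i ^ 2 := by
    simp only [trace, diag, mul_apply, transpose_apply, sq]
  have hdiag : ∑ i, P i i ^ 2 ≤ ∑ i, ∑ j, P j i ^ 2 := Finset.sum_le_sum fun i _ ↦
    Finset.single_le_sum (f := fun j ↦ P j i ^ 2) (fun j _ ↦ sq_nonneg _) (Finset.mem_univ i)
  rw [hsum]
  refine div_le_of_le_mul₀ (Nat.cast_nonneg _) (by positivity) ?_
  calc P.trace ^ 2 ≤ Fintype.card n * ∑ i, P i i ^ 2 := sq_sum_le_card_mul_sum_sq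
    _ ≤ _ := by rw [mul_comm]; exact mul_le_mul_of_nonneg_right hdiag (Nat.cast_nonneg _)

variable {𝕜 F : Type*} [NontriviallyNormedField 𝕜] [NormedAddCommGroup F] [NormedSpace 𝕜 F]

theorem hasDerivAt_trace {P : 𝕜 → Matrix n n F} {P' : Matrix n n F} {t : 𝕜}
    (h : ∀ i, HasDerivAt (fun u ↦ P u i i) (P' i i) t) :
    HasDerivAt (fun u ↦ (P u).trace) P'.trace t := by
  simpa only [trace, diag] using HasDerivAt.fun_sum (u := Finset.univ) fun i _ ↦ h i

variable [DecidableEq n]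

open scoped MatrixOrder in
theorem IsHermitian.posSemidef_smul_one_sub {M : Matrix n n ℝ} (hM : M.IsHermitian) {μ : ℝ}
    (h : ∀ i, hM.eigenvalues i ≤ μ) : (μ • 1 - M).PosSemidef := by
  rw [← Algebra.algebraMap_eq_smul_one, ← le_iff, le_algebraMap_iff_spectrum_le hM.isSelfAdjoint,
    hM.spectrum_real_eq_range_eigenvalues]
  rintro _ ⟨i, rfl⟩
  exact h i

open scoped MatrixOrder in
theorem IsHermitian.posSemidef_sub_smul_one {M : Matrix n n ℝ} (hM : M.IsHermitian) {μ : ℝ}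
    (h : ∀ i, μ ≤ hM.eigenvalues i) : (M - μ • 1).PosSemidef := by
  rw [← Algebra.algebraMap_eq_smul_one, ← le_iff, algebraMap_le_iff_le_spectrum hM.isSelfAdjoint,
    hM.spectrum_real_eq_range_eigenvalues]
  rintro _ ⟨i, rfl⟩
  exact h i

theorem IsHermitian.eigenvalues_le_lambdaMax {M : Matrix n n ℝ} (hM : M.IsHermitian) (i : n) :
    hM.eigenvalues i ≤ lambdaMax hM :=
  le_ciSup (Set.finite_range _).bddAbove i

theorem IsHermitian.lambdaMin_le_eigenvalues {M : Matrix n n ℝ} (hM : M.IsHermitian) (i : n) :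
    lambdaMin hM ≤ hM.eigenvalues i :=
  ciInf_le (Set.finite_range _).bddBelow i

theorem PosSemidef.lambdaMin_nonneg {M : Matrix n n ℝ} (hM : M.PosSemidef) :
    0 ≤ lambdaMin hM.isHermitian := by
  cases isEmpty_or_nonempty n
  · exact (Real.iInf_of_isEmpty _).ge
  · exact le_ciInf hM.eigenvalues_nonneg

theorem IsHermitian.trace_mul_le_lambdaMax_mul_trace {M P : Matrix n n ℝ} (hM : M.IsHermitian)
    (hP : P.PosSemidef) : (M * P).trace ≤ lambdaMax hM * P.trace := by
  have := ((hM.posSemidef_smul_one_sub hM.eigenvalues_le_lambdaMax).trace_mul_nonneg hP)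
  rw [sub_mul, smul_mul, one_mul, trace_sub, trace_smul, smul_eq_mul] at this
  linarith

theorem IsHermitian.lambdaMin_mul_trace_le {S P : Matrix n n ℝ} (hS : S.IsHermitian)
    (hP : P.IsHermitian) : lambdaMin hS * (P * P).trace ≤ (P * S * P).trace := by
  have := ((hS.posSemidef_sub_smul_one hS.lambdaMin_le_eigenvalues).conjTranspose_mul_mul_same
    P).trace_nonneg
  rw [hP.eq, mul_sub, sub_mul, Matrix.mul_smul, smul_mul, mul_one, trace_sub, trace_smul,
    smul_eq_mul] at this
  linarith

end Matrix

theorem trace_mul_add_trace_mul_transpose {r : ℕ} (A P : Matrix (Fin r) (Fin r) ℝ) :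
    (A * P).trace + (P * Aᵀ).trace = 2 * (symmPart A * P).trace := by
  rw [trace_mul_comm P, symmPart, smul_mul, add_mul, trace_smul, trace_add, smul_eq_mul]
  ring

theorem trace_riccati_le {r : ℕ} (A S R P : Matrix (Fin r) (Fin r) ℝ) (hS : S.PosSemidef)
    (hP : P.PosSemidef) :
    (A * P + P * Aᵀ - P * S * P + R).trace ≤
      2 * logNorm A * P.trace - (lambdaMin hS.isHermitian / r) * P.trace ^ 2 + R.trace := by
  have hdrift : 2 * (symmPart A * P).trace ≤ 2 * logNorm A * P.trace := by
    rw [mul_assoc]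
    gcongr
    exact (symmPart_isHermitian A).trace_mul_le_lambdaMax_mul_trace hP
  have hdamping : lambdaMin hS.isHermitian / r * P.trace ^ 2 ≤ (P * S * P).trace := by
    have hcs := sq_trace_div_card_le_trace_transpose_mul_self P
    rw [Fintype.card_fin, (isHermitian_iff_isSymm.mp hP.isHermitian).eq] at hcs
    calc lambdaMin hS.isHermitian / r * P.trace ^ 2
        = lambdaMin hS.isHermitian * (P.trace ^ 2 / r) := by ring
      _ ≤ lambdaMin hS.isHermitian * (P * P).trace := by
        gcongr
        exact hS.lambdaMin_nonneg
      _ ≤ (P * S * P).trace := hS.isHermitian.lambdaMin_mul_trace_le hP.isHermitian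
  rw [trace_add, trace_sub, trace_add, trace_mul_add_trace_mul_transpose]
  linarith

theorem nonpos_of_hasDerivAt_le_mul {h h' a : ℝ → ℝ} (ha : Continuous a)
    (hh : ∀ t, HasDerivAt h (h' t) t) (hle : ∀ t, h' t ≤ a t * h t) (h0 : h 0 ≤ 0) {t : ℝ}
    (ht : 0 ≤ t) : h t ≤ 0 := by
  set I := fun t ↦ ∫ s in (0 : ℝ)..t, a s
  have hI t : HasDerivAt I (a t) t := (ha.integral_hasStrictDerivAt 0 t).hasDerivAt
  have hweighted t : HasDerivAt (fun t ↦ exp (-I t) * h t)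
      (exp (-I t) * (h' t - a t * h t)) t :=
    ((hI t).fun_neg.exp.mul (hh t)).congr_deriv (by ring)
  have hanti := antitone_of_hasDerivAt_nonpos hweighted fun t ↦
    mul_nonpos_of_nonneg_of_nonpos (exp_pos _).le (sub_nonpos.2 (hle t))
  have : exp (-I t) * h t ≤ h 0 := by simpa [I] using hanti ht
  exact nonpos_of_mul_nonpos_right (this.trans h0) (exp_pos _)

theorem trace_riccati_comparison_general {r : ℕ}
    (A S R : Matrix (Fin r) (Fin r) ℝ) (hS : S.PosDef)
    (P : ℝ → Matrix (Fin r) (Fin r) ℝ)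
    (hP : ∀ t i j, HasDerivAt (fun u => P u i j)
      ((A * P t + P t * Aᵀ - P t * S * P t + R) i j) t)
    (hpsd : ∀ t, (P t).PosSemidef)
    (g : ℝ → ℝ)
    (hg : ∀ t, HasDerivAt g
      (2 * logNorm A * g t - (lambdaMin hS.posSemidef.isHermitian / r) * g t ^ 2 +
        Matrix.trace R) t)
    (hg0 : g 0 = Matrix.trace (P 0)) :
    (∀ t, Matrix.trace (A * P t + P t * Aᵀ - P t * S * P t + R) ≤
        2 * logNorm A * Matrix.trace (P t) -
          (lambdaMin hS.posSemidef.isHermitian / r) * (Matrix.trace (P t)) ^ 2 +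
          Matrix.trace R) ∧
    ∀ t ≥ (0 : ℝ), Matrix.trace (P t) ≤
      g t + Real.exp (2 * logNorm A * t) * (Matrix.trace (P 0) - g 0) := by
  have htrace_le t := trace_riccati_le A S R (P t) hS.posSemidef (hpsd t)
  refine ⟨htrace_le, fun t ht ↦ ?_⟩
  rw [hg0, sub_self, mul_zero, add_zero]
  set c := lambdaMin hS.posSemidef.isHermitian / r
  have hc : 0 ≤ c := div_nonneg hS.posSemidef.lambdaMin_nonneg r.cast_nonneg
  have hgap s := (hasDerivAt_trace fun i ↦ hP s i i).sub (hg s)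
  have hg_cont : Continuous g := continuous_iff_continuousAt.2 fun s ↦ (hg s).continuousAt
  -- The scalar Riccati field is concave, so it lies below its tangent line at `g s`.
  have hgap_le s : (A * P s + P s * Aᵀ - P s * S * P s + R).trace -
      (2 * logNorm A * g s - c * g s ^ 2 + R.trace) ≤
        (2 * logNorm A - 2 * c * g s) * ((P s).trace - g s) := by
    nlinarith [htrace_le s, mul_nonneg hc (sq_nonneg ((P s).trace - g s))]
  simpa [sub_nonpos] using
    nonpos_of_hasDerivAt_le_mul (by fun_prop) hgap hgap_le (by simp [hg0]) ht

/-- trace differential inequality and comparison with a scalar Riccati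
equation for the matrix Riccati flow. -/
theorem trace_riccati_comparison {r : ℕ}
    (A S R : Matrix (Fin r) (Fin r) ℝ) (hS : S.PosDef) (hR : R.PosSemidef)
    (hμ : logNorm A < 0)
    (P : ℝ → Matrix (Fin r) (Fin r) ℝ)
    (hP : ∀ t i j, HasDerivAt (fun u => P u i j)
      ((A * P t + P t * Aᵀ - P t * S * P t + R) i j) t)
    (hpsd : ∀ t, (P t).PosSemidef)
    (g : ℝ → ℝ)
    (hg : ∀ t, HasDerivAt g
      (2 * logNorm A * g t - (lambdaMin hS.posSemidef.isHermitian / r) * g t ^ 2 +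
        Matrix.trace R) t)
    (hg0 : g 0 = Matrix.trace (P 0)) :
    (∀ t, Matrix.trace (A * P t + P t * Aᵀ - P t * S * P t + R) ≤
        2 * logNorm A * Matrix.trace (P t) -
          (lambdaMin hS.posSemidef.isHermitian / r) * (Matrix.trace (P t)) ^ 2 +
          Matrix.trace R) ∧
    ∀ t ≥ (0 : ℝ), Matrix.trace (P t) ≤
      g t + Real.exp (2 * logNorm A * t) * (Matrix.trace (P 0) - g 0) :=
  trace_riccati_comparison_general A S R hS P hP hpsd g hg hg0
end
end

section
/- Suppose S = ρ·Id with ρ > 0, μ(A) < 0, and let P_t, Q_t be two solutions of the matrix Riccati equation ∂_t P = AP + PAᵀ − PSP + R with positive semi-definite initial conditions. Then for all t ≥ 0, ‖P_t − Q_t‖_F ≤ exp(2μ(A)t)·‖P_0 − Q_0‖_F. -/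
open Matrix MeasureTheory Real
open scoped ENNReal

noncomputable section

/-!
With `D = P - Q` and `F(X) = AX + XAᵀ - XSX + R` one has `F(P) - F(Q) = (A - ρP) D + D (A - ρQ)ᵀ`,
so `d/dt tr(DᵀD) = 2 tr(Dᵀ(A - ρP)D) + 2 tr(D(A - ρQ)ᵀDᵀ)` is a sum of quadratic forms of
`A - ρP` and `A - ρQ` evaluated at the columns and rows of `D`. When `P` and `Q` are positive
semi-definite each such form is at most `xᵀAx ≤ μ(A)|x|²`, so `tr(DᵀD)` grows at rate at most
`4μ(A)` and Grönwall's inequality gives the bound.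

It remains to see that the flow preserves symmetry and positive semi-definiteness. The skew part
`W = P - Pᵀ` solves `W' = (A - PS) W + W (A - PS)ᵀ` with `W(0) = 0`, so the same trace estimate,
with a crude bound for `A - PS` on `[0, T]`, forces `W = 0`. For positivity, `P + b·1` with the
barrier `b(t) = η e^{K(t - T)}` stays positive definite: at the first time it degenerates, a kernel
vector `x` has `Px = -b x`, hence `xᵀF(P)x = -2b xᵀAx - b² xᵀSx + xᵀRx ≥ -C b |x|²` for some `C`,
and once `K > C` the form `xᵀ(P + b·1)x` is increasing there although it has just decreased to `0`.
-/

open Set Filter Topology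

lemma continuous_of_hasDerivAt_apply {m n : Type*} {M M' : ℝ → Matrix m n ℝ}
    (hM : ∀ t i j, HasDerivAt (fun u => M u i j) (M' t i j) t) : Continuous M :=
  continuous_pi fun i => continuous_pi fun j =>
    continuous_iff_continuousAt.2 fun t => (hM t i j).continuousAt

lemma HasDerivAt.nonpos_of_eventually_le_left {f : ℝ → ℝ} {f' a : ℝ} (hf : HasDerivAt f f' a)
    (h : ∀ᶠ t in 𝓝[<] a, f a ≤ f t) : f' ≤ 0 := by
  refine le_of_tendsto (hasDerivAt_iff_tendsto_slope_left_right.mp hf).1 ?_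
  filter_upwards [h, self_mem_nhdsWithin] with t hfa (hta : t < a)
  rw [slope_def_field]
  exact div_nonpos_of_nonneg_of_nonpos (sub_nonneg.mpr hfa) (sub_nonpos.mpr hta.le)

lemma exists_first_time_nonpos {E : Type*} [TopologicalSpace E] {K : Set E} (hK : IsCompact K)
    {g : ℝ × E → ℝ} (hg : Continuous g) {a b : ℝ} (h : ∃ t ∈ Icc a b, ∃ x ∈ K, g (t, x) ≤ 0) :
    ∃ s ∈ Icc a b, (∃ x ∈ K, g (s, x) ≤ 0) ∧ ∀ t ∈ Ico a s, ∀ x ∈ K, 0 < g (t, x) := by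
  set B := {t ∈ Icc a b | ∃ x ∈ K, g (t, x) ≤ 0}
  have hB : B = Prod.fst '' ((Icc a b ×ˢ K) ∩ {p | g p ≤ 0}) := by
    ext t; simp [B]; aesop
  have hBc : IsCompact B := hB ▸ ((isCompact_Icc.prod hK).inter_right
    (isClosed_le hg continuous_const)).image continuous_fst
  obtain ⟨hs, hsB⟩ := hBc.sInf_mem h
  refine ⟨sInf B, hs, hsB, fun t ht x hx => ?_⟩
  by_contra! hneg
  exact notMem_of_lt_csInf ht.2 hBc.bddBelow ⟨⟨ht.1, ht.2.le.trans hs.2⟩, x, hx, hneg⟩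

section

variable {n : Type*} [Fintype n] {A S R : Matrix n n ℝ} {M M' : ℝ → Matrix n n ℝ} {C : ℝ}

lemma dotProduct_self_nonneg (x : n → ℝ) : 0 ≤ x ⬝ᵥ x := by
  simpa using dotProduct_self_star_nonneg x

lemma dotProduct_self_pos {x : n → ℝ} (hx : x ≠ 0) : 0 < x ⬝ᵥ x := by
  simpa using dotProduct_self_star_pos_iff.mpr hx

lemma dotProduct_add_smul_one_mulVec [DecidableEq n] (M : Matrix n n ℝ) (c : ℝ) (x : n → ℝ) :
    x ⬝ᵥ ((M + c • 1) *ᵥ x) = x ⬝ᵥ (M *ᵥ x) + c * (x ⬝ᵥ x) := by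
  simp [add_mulVec, smul_mulVec, dotProduct_add]

lemma dotProduct_mulVec_nonneg_of_sphere {H : Matrix n n ℝ}
    (h : ∀ x ∈ Metric.sphere (0 : n → ℝ) 1, 0 ≤ x ⬝ᵥ (H *ᵥ x)) (x : n → ℝ) :
    0 ≤ x ⬝ᵥ (H *ᵥ x) := by
  rcases eq_or_ne x 0 with rfl | hx
  · simp
  have hu := h (‖x‖⁻¹ • x) (by simp [norm_smul, hx])
  rw [mulVec_smul, dotProduct_smul, smul_dotProduct, smul_eq_mul, smul_eq_mul] at hu
  have : 0 < ‖x‖⁻¹ * ‖x‖⁻¹ := by positivity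
  nlinarith

lemma abs_dotProduct_mulVec_le (M : Matrix n n ℝ) (x : n → ℝ) :
    |x ⬝ᵥ (M *ᵥ x)| ≤ (∑ i, ∑ j, |M i j|) * (x ⬝ᵥ x) := by
  have hsq : ∀ i, x i * x i ≤ x ⬝ᵥ x := fun i =>
    Finset.single_le_sum (f := fun k => x k * x k) (fun k _ => mul_self_nonneg _)
      (Finset.mem_univ i)
  have hxx : ∀ i j, |x i * x j| ≤ x ⬝ᵥ x := fun i j => by
    rw [abs_le]; constructor <;> nlinarith [hsq i, hsq j, sq_nonneg (x i + x j),
      sq_nonneg (x i - x j)]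
  calc |x ⬝ᵥ (M *ᵥ x)| = |∑ i, ∑ j, M i j * (x i * x j)| := by
        simp only [dotProduct, mulVec, Finset.mul_sum]
        congr 1; refine Finset.sum_congr rfl fun i _ => Finset.sum_congr rfl fun j _ => ?_
        ring
    _ ≤ ∑ i, ∑ j, |M i j| * (x ⬝ᵥ x) := by
        refine (Finset.abs_sum_le_sum_abs _ _).trans (Finset.sum_le_sum fun i _ => ?_)
        refine (Finset.abs_sum_le_sum_abs _ _).trans (Finset.sum_le_sum fun j _ => ?_)
        rw [abs_mul]
        exact mul_le_mul_of_nonneg_left (hxx i j) (abs_nonneg _)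
    _ = (∑ i, ∑ j, |M i j|) * (x ⬝ᵥ x) := by simp only [Finset.sum_mul]

open scoped MatrixOrder in
lemma dotProduct_mulVec_le_lambdaMax [DecidableEq n] {H : Matrix n n ℝ} (hH : H.IsHermitian)
    (x : n → ℝ) : x ⬝ᵥ (H *ᵥ x) ≤ lambdaMax hH * (x ⬝ᵥ x) := by
  have hle : H ≤ algebraMap ℝ (Matrix n n ℝ) (lambdaMax hH) := by
    refine le_algebraMap_of_spectrum_le fun y hy => ?_
    rw [hH.spectrum_real_eq_range_eigenvalues] at hy
    obtain ⟨i, rfl⟩ := hy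
    exact le_ciSup (Set.finite_range _).bddAbove i
  have := (Matrix.le_iff.mp hle).dotProduct_mulVec_nonneg x
  simp only [Algebra.algebraMap_eq_smul_one, sub_mulVec, smul_mulVec, one_mulVec, star_trivial,
    dotProduct_sub, dotProduct_smul, smul_eq_mul] at this
  linarith

lemma trace_transpose_mul_mul_eq_sum (D B : Matrix n n ℝ) :
    trace (Dᵀ * B * D) = ∑ j, Dᵀ j ⬝ᵥ (B *ᵥ Dᵀ j) := by
  simp only [trace, diag, mul_apply, transpose_apply, dotProduct, mulVec, Finset.sum_mul,
    Finset.mul_sum]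
  refine Finset.sum_congr rfl fun j _ => ?_
  rw [Finset.sum_comm]
  exact Finset.sum_congr rfl fun i _ => Finset.sum_congr rfl fun k _ => by ring

lemma trace_transpose_mul_self_eq_sum (D : Matrix n n ℝ) :
    trace (Dᵀ * D) = ∑ j, Dᵀ j ⬝ᵥ Dᵀ j := by
  simp only [trace, diag, mul_apply, transpose_apply, dotProduct]

lemma trace_transpose_mul_mul_le {D B : Matrix n n ℝ} {β : ℝ}
    (hB : ∀ x, x ⬝ᵥ (B *ᵥ x) ≤ β * (x ⬝ᵥ x)) : trace (Dᵀ * B * D) ≤ β * trace (Dᵀ * D) := by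
  rw [trace_transpose_mul_mul_eq_sum, trace_transpose_mul_self_eq_sum, Finset.mul_sum]
  exact Finset.sum_le_sum fun j _ => hB _

lemma trace_transpose_mul_le {D B C : Matrix n n ℝ} {β γ : ℝ}
    (hB : ∀ x, x ⬝ᵥ (B *ᵥ x) ≤ β * (x ⬝ᵥ x)) (hC : ∀ x, x ⬝ᵥ (C *ᵥ x) ≤ γ * (x ⬝ᵥ x)) :
    trace (Dᵀ * (B * D + D * Cᵀ)) ≤ (β + γ) * trace (Dᵀ * D) := by
  have hCD : trace (Dᵀ * (D * Cᵀ)) ≤ γ * trace (Dᵀ * D) := by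
    have := trace_transpose_mul_mul_le (D := Dᵀ) (B := Cᵀ) fun x =>
      (dotProduct_transpose_mulVec C x x).trans_le (hC x)
    rwa [transpose_transpose, trace_mul_comm D Dᵀ, trace_mul_comm] at this
  rw [Matrix.mul_add, trace_add, ← Matrix.mul_assoc, add_mul]
  exact add_le_add (trace_transpose_mul_mul_le hB) hCD

lemma hasDerivAt_dotProduct_mulVec {M : ℝ → Matrix n n ℝ} {M' : Matrix n n ℝ} {t : ℝ}
    (hM : ∀ i j, HasDerivAt (fun u => M u i j) (M' i j) t) (x : n → ℝ) :
    HasDerivAt (fun u => x ⬝ᵥ (M u *ᵥ x)) (x ⬝ᵥ (M' *ᵥ x)) t := by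
  simp only [dotProduct, mulVec]
  exact HasDerivAt.fun_sum fun i _ =>
    (HasDerivAt.fun_sum fun j _ => (hM i j).mul_const (x j)).const_mul (x i)

lemma hasDerivAt_trace_transpose_mul_self {D : ℝ → Matrix n n ℝ} {D' : Matrix n n ℝ} {t : ℝ}
    (hD : ∀ i j, HasDerivAt (fun u => D u i j) (D' i j) t) :
    HasDerivAt (fun u => trace ((D u)ᵀ * D u)) (2 * trace ((D t)ᵀ * D')) t := by
  simp only [trace, diag, mul_apply, transpose_apply, Finset.mul_sum]
  refine HasDerivAt.fun_sum fun i _ => HasDerivAt.fun_sum fun j _ => ?_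
  exact ((hD j i).fun_mul (hD j i)).congr_deriv (by ring)

lemma trace_transpose_mul_self_le_of_hasDerivAt {D D' : ℝ → Matrix n n ℝ}
    (hD : ∀ t i j, HasDerivAt (fun u => D u i j) (D' t i j) t) {K T : ℝ} (hT : 0 ≤ T)
    (hK : ∀ t ∈ Ico 0 T, trace ((D t)ᵀ * D' t) ≤ K * trace ((D t)ᵀ * D t)) :
    trace ((D T)ᵀ * D T) ≤ trace ((D 0)ᵀ * D 0) * exp (2 * K * T) := by
  have hderiv t := hasDerivAt_trace_transpose_mul_self (hD t)
  have := le_gronwallBound_of_liminf_deriv_right_le (K := 2 * K) (ε := 0)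
    (fun t _ => (hderiv t).continuousAt.continuousWithinAt)
    (fun t _ _ hr => (hderiv t).hasDerivWithinAt.liminf_right_slope_le hr) le_rfl
    (fun t ht => by linarith [hK t ht]) T ⟨hT, le_rfl⟩
  rwa [gronwallBound_ε0, sub_zero] at this

lemma mulVec_eq_neg_smul_of_posSemidef_add [DecidableEq n] {M : Matrix n n ℝ} {c : ℝ}
    {x : n → ℝ} (hpsd : (M + c • 1).PosSemidef) (hx : x ⬝ᵥ ((M + c • 1) *ᵥ x) ≤ 0) :
    M *ᵥ x = -c • x := by
  have hzero := (hpsd.dotProduct_mulVec_zero_iff x).mp <| by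
    rw [star_trivial]
    exact le_antisymm hx (by simpa using hpsd.dotProduct_mulVec_nonneg x)
  rw [add_mulVec, smul_mulVec, one_mulVec] at hzero
  rw [neg_smul, eq_neg_of_add_eq_zero_left hzero]

lemma posSemidef_of_eventually_pos_left {H : ℝ → Matrix n n ℝ} (hH : Continuous H) {s : ℝ}
    (hsymm : (H s)ᵀ = H s)
    (h : ∀ y ∈ Metric.sphere (0 : n → ℝ) 1, ∀ᶠ u in 𝓝[<] s, 0 < y ⬝ᵥ (H u *ᵥ y)) :
    (H s).PosSemidef := by
  refine .of_dotProduct_mulVec_nonneg (isHermitian_iff_isSymm.mpr hsymm) fun y => ?_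
  rw [star_trivial]
  refine dotProduct_mulVec_nonneg_of_sphere (fun y hy => ?_) y
  have hc : Continuous fun u => y ⬝ᵥ (H u *ᵥ y) := by fun_prop
  exact ge_of_tendsto (hc.continuousAt.mono_left nhdsWithin_le_nhds)
    ((h y hy).mono fun _ => le_of_lt)

lemma dotProduct_add_exp_smul_one_mulVec_pos [DecidableEq n]
    (hM : ∀ t i j, HasDerivAt (fun u => M u i j) (M' t i j) t)
    (hsymm : ∀ t ≥ 0, (M t)ᵀ = M t) (h0 : (M 0).PosSemidef)
    (htangent : ∀ t ≥ 0, ∀ δ ∈ Ioc (0 : ℝ) 1, ∀ x, M t *ᵥ x = -δ • x →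
      -(C * δ) * (x ⬝ᵥ x) ≤ x ⬝ᵥ (M' t *ᵥ x))
    {K η T : ℝ} (hK : 0 ≤ K) (hCK : C < K) (hη : η ∈ Ioc (0 : ℝ) 1) :
    ∀ t ∈ Icc 0 T, ∀ x ∈ Metric.sphere (0 : n → ℝ) 1,
      0 < x ⬝ᵥ ((M t + (η * exp (K * (t - T))) • 1) *ᵥ x) := by
  set b : ℝ → ℝ := fun t => η * exp (K * (t - T))
  set g : ℝ × (n → ℝ) → ℝ := fun p => p.2 ⬝ᵥ ((M p.1 + b p.1 • 1) *ᵥ p.2)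
  have hMc := continuous_of_hasDerivAt_apply hM
  have hg : Continuous g := by fun_prop
  by_contra! hbad
  obtain ⟨s, hs, ⟨x, hx, hgx⟩, hbefore⟩ :=
    exists_first_time_nonpos (isCompact_sphere 0 1) hg (by simpa [g] using hbad)
  have hxx : 0 < x ⬝ᵥ x := dotProduct_self_pos (by rintro rfl; simp at hx)
  have hb : 0 < b s := mul_pos hη.1 (exp_pos _)
  have hb1 : b s ≤ 1 := mul_le_one₀ hη.2 (exp_pos _).le
    (exp_le_one_iff.mpr (mul_nonpos_of_nonneg_of_nonpos hK (sub_nonpos.mpr hs.2)))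
  have hs0 : 0 < s := by
    refine hs.1.lt_of_ne fun hs0 => ?_
    subst hs0
    have := h0.dotProduct_mulVec_nonneg x
    simp only [g, dotProduct_add_smul_one_mulVec, star_trivial] at hgx this
    nlinarith
  have hleft : ∀ y ∈ Metric.sphere (0 : n → ℝ) 1, ∀ᶠ u in 𝓝[<] s, 0 < g (u, y) := fun y hy => by
    filter_upwards [Ioo_mem_nhdsLT hs0] with u hu using hbefore u ⟨hu.1.le, hu.2⟩ y hy
  have hker : M s *ᵥ x = -b s • x :=
    mulVec_eq_neg_smul_of_posSemidef_add (posSemidef_of_eventually_pos_left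
      (H := fun u => M u + b u • 1) (by fun_prop) (by simp [transpose_add, hsymm s hs.1]) hleft) hgx
  have hbd : HasDerivAt b (K * b s) s :=
    ((((hasDerivAt_id s).sub_const T).const_mul K).exp.const_mul η).congr_deriv (by simp [b]; ring)
  have hderiv : HasDerivAt (fun u => g (u, x)) (x ⬝ᵥ ((M' s + (K * b s) • 1) *ᵥ x)) s :=
    hasDerivAt_dotProduct_mulVec (fun i j => (hM s i j).add (hbd.mul_const _)) x
  have hnonpos := hderiv.nonpos_of_eventually_le_left <| by
    filter_upwards [hleft x hx] with u hu using hgx.trans hu.le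
  have htan := htangent s hs.1 (b s) ⟨hb, hb1⟩ x hker
  rw [dotProduct_add_smul_one_mulVec] at hnonpos
  nlinarith [mul_pos (mul_pos (sub_pos.mpr hCK) hb) hxx]

theorem posSemidef_of_hasDerivAt [DecidableEq n]
    (hM : ∀ t i j, HasDerivAt (fun u => M u i j) (M' t i j) t)
    (hsymm : ∀ t ≥ 0, (M t)ᵀ = M t) (h0 : (M 0).PosSemidef)
    (htangent : ∀ t ≥ 0, ∀ δ ∈ Ioc (0 : ℝ) 1, ∀ x, M t *ᵥ x = -δ • x →
      -(C * δ) * (x ⬝ᵥ x) ≤ x ⬝ᵥ (M' t *ᵥ x)) {T : ℝ} (hT : 0 ≤ T) :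
    (M T).PosSemidef := by
  refine .of_dotProduct_mulVec_nonneg (isHermitian_iff_isSymm.mpr (hsymm T hT)) fun x => ?_
  rw [star_trivial]
  refine dotProduct_mulVec_nonneg_of_sphere (fun x hx => ?_) x
  have hxx : 0 < x ⬝ᵥ x := dotProduct_self_pos (by rintro rfl; simp at hx)
  have hbarrier : ∀ η ∈ Ioc (0 : ℝ) 1, 0 < x ⬝ᵥ (M T *ᵥ x) + η * (x ⬝ᵥ x) := fun η hη => by
    simpa [dotProduct_add_smul_one_mulVec] using dotProduct_add_exp_smul_one_mulVec_pos hM hsymm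
      h0 htangent (abs_nonneg C |>.trans (lt_add_one _).le) ((le_abs_self C).trans_lt
      (lt_add_one _)) hη T ⟨hT, le_rfl⟩ x hx
  by_contra! hneg
  set η := min 1 (-(x ⬝ᵥ (M T *ᵥ x)) / (x ⬝ᵥ x))
  have hη : 0 < η := lt_min one_pos (div_pos (neg_pos.mpr hneg) hxx)
  have hηx : η * (x ⬝ᵥ x) ≤ -(x ⬝ᵥ (M T *ᵥ x)) := (le_div_iff₀ hxx).mp (min_le_right _ _)
  linarith [hbarrier η ⟨hη, min_le_left _ _⟩]

def riccatiField (A S R X : Matrix n n ℝ) : Matrix n n ℝ :=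
  A * X + X * Aᵀ - X * S * X + R

lemma riccatiField_sub (X Y : Matrix n n ℝ) :
    riccatiField A S R X - riccatiField A S R Y =
      (A - X * S) * (X - Y) + (X - Y) * (A - Yᵀ * Sᵀ)ᵀ := by
  simp only [riccatiField, transpose_sub, transpose_mul, transpose_transpose]
  noncomm_ring

lemma riccatiField_transpose (hS : Sᵀ = S) (hR : Rᵀ = R) (X : Matrix n n ℝ) :
    (riccatiField A S R X)ᵀ = riccatiField A S R Xᵀ := by
  simp only [riccatiField, transpose_add, transpose_sub, transpose_mul, transpose_transpose, hS,
    hR, Matrix.mul_assoc]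
  abel

lemma dotProduct_riccatiField_mulVec {X : Matrix n n ℝ} (hX : Xᵀ = X) {x : n → ℝ} {c : ℝ}
    (hx : X *ᵥ x = c • x) :
    x ⬝ᵥ (riccatiField A S R X *ᵥ x) =
      2 * c * (x ⬝ᵥ (A *ᵥ x)) - c ^ 2 * (x ⬝ᵥ (S *ᵥ x)) + x ⬝ᵥ (R *ᵥ x) := by
  have hxX : x ᵥ* X = c • x := by rw [← hX, vecMul_transpose, hx]
  simp only [riccatiField, add_mulVec, sub_mulVec, ← mulVec_mulVec, hx, mulVec_smul,
    dotProduct_add, dotProduct_sub, dotProduct_smul, dotProduct_mulVec x X, hxX,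
    smul_dotProduct, dotProduct_transpose_mulVec A x x, smul_eq_mul]
  ring

lemma riccati_transpose_eq (hS : Sᵀ = S) (hR : Rᵀ = R) {P : ℝ → Matrix n n ℝ}
    (hP : ∀ t i j, HasDerivAt (fun u => P u i j) (riccatiField A S R (P t) i j) t)
    (h0 : (P 0)ᵀ = P 0) {T : ℝ} (hT : 0 ≤ T) : (P T)ᵀ = P T := by
  have hPc := continuous_of_hasDerivAt_apply hP
  obtain ⟨β, hβ⟩ := (isCompact_Icc : IsCompact (Icc 0 T)).bddAbove_image
    (f := fun t => ∑ i, ∑ j, |(A - P t * S) i j|) (by fun_prop)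
  have hB : ∀ t ∈ Icc 0 T, ∀ x, x ⬝ᵥ ((A - P t * S) *ᵥ x) ≤ β * (x ⬝ᵥ x) := fun t ht x =>
    (le_abs_self _).trans <| (abs_dotProduct_mulVec_le _ x).trans <|
      mul_le_mul_of_nonneg_right (hβ ⟨t, ht, rfl⟩) (dotProduct_self_nonneg x)
  have key := trace_transpose_mul_self_le_of_hasDerivAt (D := fun t => P t - (P t)ᵀ)
    (D' := fun t => riccatiField A S R (P t) - (riccatiField A S R (P t))ᵀ)
    (fun t i j => (hP t i j).sub (hP t j i)) (K := 2 * β) hT fun t ht => by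
      rw [riccatiField_transpose hS hR, riccatiField_sub, transpose_transpose, hS, two_mul]
      exact trace_transpose_mul_le (hB t (Ico_subset_Icc_self ht)) (hB t (Ico_subset_Icc_self ht))
  simp only [h0, sub_self, Matrix.mul_zero, trace_zero, zero_mul] at key
  have hzero : trace ((P T - (P T)ᵀ)ᴴ * (P T - (P T)ᵀ)) = 0 := by
    simpa using le_antisymm key (by simpa using (posSemidef_conjTranspose_mul_self
      (P T - (P T)ᵀ)).trace_nonneg)
  exact (sub_eq_zero.mp (trace_conjTranspose_mul_self_eq_zero_iff.mp hzero)).symm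

lemma riccati_posSemidef [DecidableEq n] (hS : Sᵀ = S) (hR : R.PosSemidef) {P : ℝ → Matrix n n ℝ}
    (hP : ∀ t i j, HasDerivAt (fun u => P u i j) (riccatiField A S R (P t) i j) t)
    (hP0 : (P 0).PosSemidef) {T : ℝ} (hT : 0 ≤ T) : (P T).PosSemidef := by
  have hsymm : ∀ t ≥ 0, (P t)ᵀ = P t := fun t ht =>
    riccati_transpose_eq hS (isHermitian_iff_isSymm.mp hR.1).eq hP
      (isHermitian_iff_isSymm.mp hP0.1).eq ht
  refine posSemidef_of_hasDerivAt hP hsymm hP0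
    (C := 2 * ∑ i, ∑ j, |A i j| + ∑ i, ∑ j, |S i j|) (fun t ht δ hδ x hx => ?_) hT
  rw [dotProduct_riccatiField_mulVec (hsymm t ht) hx]
  have hAx := (abs_le.mp (abs_dotProduct_mulVec_le A x)).2
  have hSx := (abs_le.mp (abs_dotProduct_mulVec_le S x)).2
  have hRx : 0 ≤ x ⬝ᵥ (R *ᵥ x) := by simpa using hR.dotProduct_mulVec_nonneg x
  have hxx := dotProduct_self_nonneg x
  have hSsum : 0 ≤ ∑ i, ∑ j, |S i j| := by positivity
  nlinarith [mul_le_mul_of_nonneg_left hAx hδ.1.le, mul_le_mul_of_nonneg_left hSx (sq_nonneg δ),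
    mul_nonneg (mul_nonneg hδ.1.le (sub_nonneg.mpr hδ.2)) (mul_nonneg hSsum hxx)]

end

lemma dotProduct_mulVec_le_logNorm {r : ℕ} (A : Matrix (Fin r) (Fin r) ℝ) (x : Fin r → ℝ) :
    x ⬝ᵥ (A *ᵥ x) ≤ logNorm A * (x ⬝ᵥ x) := by
  have hsymm : x ⬝ᵥ (symmPart A *ᵥ x) = x ⬝ᵥ (A *ᵥ x) := by
    simp only [symmPart, smul_mulVec, add_mulVec, dotProduct_smul, dotProduct_add,
      dotProduct_transpose_mulVec A x x, smul_eq_mul]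
    ring
  rw [← hsymm]
  exact dotProduct_mulVec_le_lambdaMax (symmPart_isHermitian A) x

lemma dotProduct_sub_mul_smul_one_mulVec_le {r : ℕ} (A : Matrix (Fin r) (Fin r) ℝ)
    {X : Matrix (Fin r) (Fin r) ℝ} (hX : X.PosSemidef) {ρ : ℝ} (hρ : 0 ≤ ρ) (x : Fin r → ℝ) :
    x ⬝ᵥ ((A - X * ρ • 1) *ᵥ x) ≤ logNorm A * (x ⬝ᵥ x) := by
  have hXx : 0 ≤ x ⬝ᵥ (X *ᵥ x) := by simpa using hX.dotProduct_mulVec_nonneg x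
  simp only [Matrix.mul_smul, Matrix.mul_one, sub_mulVec, smul_mulVec, dotProduct_sub,
    dotProduct_smul, smul_eq_mul]
  nlinarith [dotProduct_mulVec_le_logNorm A x, mul_nonneg hρ hXx]

lemma frobNorm_le_exp_mul_of_trace_le {r : ℕ} {X Y : Matrix (Fin r) (Fin r) ℝ} {c : ℝ}
    (h : trace (Xᵀ * X) ≤ trace (Yᵀ * Y) * exp (2 * c)) : frobNorm X ≤ exp c * frobNorm Y := by
  have hexp : exp (2 * c) = exp c ^ 2 := by rw [sq, ← exp_add, two_mul]
  calc frobNorm X ≤ √(trace (Yᵀ * Y) * exp (2 * c)) := sqrt_le_sqrt h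
    _ = exp c * frobNorm Y := by
      rw [hexp, sqrt_mul' _ (sq_nonneg _), sqrt_sq (exp_pos c).le, frobNorm, mul_comm]

theorem riccati_frobenius_contraction_general {r : ℕ}
    (A : Matrix (Fin r) (Fin r) ℝ) (ρ : ℝ) (hρ : 0 < ρ)
    (S : Matrix (Fin r) (Fin r) ℝ) (hSρ : S = ρ • (1 : Matrix (Fin r) (Fin r) ℝ))
    (R : Matrix (Fin r) (Fin r) ℝ) (hR : R.PosSemidef)
    (P Q : ℝ → Matrix (Fin r) (Fin r) ℝ)
    (hP : ∀ t i j, HasDerivAt (fun u => P u i j)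
      ((A * P t + P t * Aᵀ - P t * S * P t + R) i j) t)
    (hQ : ∀ t i j, HasDerivAt (fun u => Q u i j)
      ((A * Q t + Q t * Aᵀ - Q t * S * Q t + R) i j) t)
    (hP0 : (P 0).PosSemidef) (hQ0 : (Q 0).PosSemidef) :
    ∀ t ≥ (0 : ℝ),
      frobNorm (P t - Q t) ≤ Real.exp (2 * logNorm A * t) * frobNorm (P 0 - Q 0) := by
  have hS : Sᵀ = S := by simp [hSρ]
  intro t ht
  have key := trace_transpose_mul_self_le_of_hasDerivAt (D := fun s => P s - Q s)
    (D' := fun s => riccatiField A S R (P s) - riccatiField A S R (Q s))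
    (fun s i j => (hP s i j).sub (hQ s i j)) (K := 2 * logNorm A) ht fun s hs => by
      rw [riccatiField_sub, two_mul, hSρ, transpose_smul, transpose_one]
      exact trace_transpose_mul_le
        (dotProduct_sub_mul_smul_one_mulVec_le A (riccati_posSemidef hS hR hP hP0 hs.1) hρ.le)
        (dotProduct_sub_mul_smul_one_mulVec_le A
          (riccati_posSemidef hS hR hQ hQ0 hs.1).transpose hρ.le)
  exact frobNorm_le_exp_mul_of_trace_le (key.trans_eq (by ring_nf))

/-- exponential Frobenius contraction of the Riccati flow when
`S = ρ·Id` and `μ(A) < 0`. -/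
theorem riccati_frobenius_contraction {r : ℕ}
    (A : Matrix (Fin r) (Fin r) ℝ) (ρ : ℝ) (hρ : 0 < ρ)
    (S : Matrix (Fin r) (Fin r) ℝ) (hSρ : S = ρ • (1 : Matrix (Fin r) (Fin r) ℝ))
    (R : Matrix (Fin r) (Fin r) ℝ) (hR : R.PosSemidef)
    (hμ : logNorm A < 0)
    (P Q : ℝ → Matrix (Fin r) (Fin r) ℝ)
    (hP : ∀ t i j, HasDerivAt (fun u => P u i j)
      ((A * P t + P t * Aᵀ - P t * S * P t + R) i j) t)
    (hQ : ∀ t i j, HasDerivAt (fun u => Q u i j)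
      ((A * Q t + Q t * Aᵀ - Q t * S * Q t + R) i j) t)
    (hP0 : (P 0).PosSemidef) (hQ0 : (Q 0).PosSemidef) :
    ∀ t ≥ (0 : ℝ),
      frobNorm (P t - Q t) ≤ Real.exp (2 * logNorm A * t) * frobNorm (P 0 - Q 0) :=
  riccati_frobenius_contraction_general A ρ hρ S hSρ R hR P Q hP hQ hP0 hQ0
end
end

section
/- For any r×r real matrices A and B with ‖A‖_F·‖B‖_F < 1/2, one has |log det(I − AB)| ≤ (3/2)·‖A‖_F·‖B‖_F. -/
/-! Put `x = ‖A‖_F ‖B‖_F` and `L t = log det (1 - t • AB)`, so `L 0 = 0`. By Jacobi's formula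
`L' t = -tr (A · B (1 - t • AB)⁻¹)`, so Cauchy–Schwarz for the trace pairing bounds `|L' t|` by
`‖A‖_F ‖B (1 - t • AB)⁻¹‖_F`. Keeping `B` with the inverse matters (the inverse alone has Frobenius
norm of order `√r`): from `B (1 - t • AB)⁻¹ = B + t • B (1 - t • AB)⁻¹ AB` we get
`‖B (1 - t • AB)⁻¹‖_F ≤ ‖B‖_F / (1 - t x)`. Hence `|L' t| ≤ x / (1 - t x) ≤ x + 2 x² t` while
`t x ≤ 1/2`, and comparing `L` with `x t + x² t²` on `[0, 1]` gives `|L 1| ≤ x + x² ≤ 3x/2`. -/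

open Matrix MeasureTheory Real
open scoped ENNReal

noncomputable section

open scoped Matrix.Norms.Frobenius

theorem norm_le_div_of_mul_one_sub_mul_eq {R : Type*} [SeminormedRing R] {a b y : R}
    (hab : ‖a‖ * ‖b‖ < 1) (h : y * (1 - a * b) = b) : ‖y‖ ≤ ‖b‖ / (1 - ‖a‖ * ‖b‖) := by
  have : ‖y‖ ≤ ‖b‖ + ‖y‖ * (‖a‖ * ‖b‖) := calc
    ‖y‖ = ‖y * (1 - a * b) + y * (a * b)‖ := by noncomm_ring
    _ ≤ ‖b‖ + ‖y * (a * b)‖ := by grw [norm_add_le, h]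
    _ ≤ ‖b‖ + ‖y‖ * (‖a‖ * ‖b‖) := by grw [norm_mul_le, norm_mul_le]
  rw [le_div_iff₀ (by linarith)]
  linarith

theorem norm_image_one_le_of_norm_deriv_le {E : Type*} [NormedAddCommGroup E] [NormedSpace ℝ E]
    {f f' : ℝ → E} {a b : ℝ} (hf0 : f 0 = 0) (hf : ∀ t ∈ Set.Icc (0 : ℝ) 1, HasDerivAt f (f' t) t)
    (bound : ∀ t ∈ Set.Ico (0 : ℝ) 1, ‖f' t‖ ≤ a + 2 * b * t) : ‖f 1‖ ≤ a + b := by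
  have hB : ∀ t, HasDerivAt (fun t : ℝ => a * t + b * t ^ 2) (a + 2 * b * t) t := by
    intro t
    refine (((hasDerivAt_id t).const_mul a).add
      ((hasDerivAt_pow 2 t).const_mul b)).congr_deriv ?_
    simp only [mul_one, Nat.cast_ofNat]
    ring
  simpa using image_norm_le_of_norm_deriv_right_le_deriv_boundary
    (fun t ht => (hf t ht).continuousAt.continuousWithinAt)
    (fun t ht => (hf t (Set.Ico_subset_Icc_self ht)).hasDerivWithinAt) (by simp [hf0]) hB bound
    (Set.right_mem_Icc.2 zero_le_one)

namespace Matrix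

section Derivative

variable {𝕜 : Type*} [NontriviallyNormedField 𝕜] {n : Type*} [Fintype n] [DecidableEq n]

theorem hasDerivAt_det_one_add_smul (M : Matrix n n 𝕜) :
    HasDerivAt (fun t : 𝕜 => (1 + t • M).det) M.trace 0 := by
  set P : Polynomial 𝕜 := (1 + (Polynomial.X : Polynomial 𝕜) • M.map Polynomial.C).det
  have hP : (fun t : 𝕜 => (1 + t • M).det) = fun t => P.eval t := by
    funext t
    rw [← Polynomial.coe_evalRingHom, RingHom.map_det]
    congr 1
    ext i j
    by_cases hij : i = j <;> simp [hij] <;> ring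
  rw [hP, ← derivative_det_one_add_X_smul M]
  exact P.hasDerivAt 0

theorem hasDerivAt_det_one_sub_smul (M : Matrix n n 𝕜) {t : 𝕜} (ht : (1 - t • M).det ≠ 0) :
    HasDerivAt (fun s : 𝕜 => (1 - s • M).det)
      (-((1 - t • M).det * trace (M * (1 - t • M)⁻¹))) t := by
  set N := 1 - t • M
  have hN : N * N⁻¹ = 1 := mul_nonsing_inv N (isUnit_iff_ne_zero.mpr ht)
  have hfactor : ∀ s : 𝕜, 1 - s • M = N * (1 + (s - t) • -(N⁻¹ * M)) := by
    intro s
    rw [mul_add, mul_one, Matrix.mul_smul, mul_neg, ← Matrix.mul_assoc, hN, Matrix.one_mul]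
    simp only [N, sub_smul, smul_neg]
    abel
  have hshift :
      HasDerivAt (fun s : 𝕜 => (1 + s • -(N⁻¹ * M)).det) (-(N⁻¹ * M)).trace (t - t) := by
    rw [sub_self]
    exact hasDerivAt_det_one_add_smul _
  have hdet : (fun s : 𝕜 => (1 - s • M).det) = fun s => N.det * (1 + (s - t) • -(N⁻¹ * M)).det :=
    funext fun s => by rw [hfactor s, det_mul]
  rw [hdet, show -(N.det * trace (M * N⁻¹)) = N.det * (-(N⁻¹ * M)).trace by
    rw [trace_neg, trace_mul_comm]; ring]
  exact (hshift.comp_sub_const t t).const_mul N.det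

theorem hasDerivAt_log_det_one_sub_smul (M : Matrix n n ℝ) {t : ℝ} (ht : (1 - t • M).det ≠ 0) :
    HasDerivAt (fun s : ℝ => Real.log (1 - s • M).det) (-trace (M * (1 - t • M)⁻¹)) t := by
  have h := (hasDerivAt_det_one_sub_smul M ht).log ht
  rwa [neg_div, mul_div_cancel_left₀ _ ht] at h

end Derivative

section Frobenius

variable {m n : Type*} [Fintype m] [Fintype n]

theorem frobenius_norm_sq_eq_sum (X : Matrix m n ℝ) : ‖X‖ ^ 2 = ∑ i, ∑ j, X i j ^ 2 := by
  rw [frobenius_norm_def, ← Real.sqrt_eq_rpow, Real.sq_sqrt (by positivity)]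
  simp [Real.norm_eq_abs, sq_abs]

theorem abs_trace_mul_le (X : Matrix m n ℝ) (Y : Matrix n m ℝ) :
    |trace (X * Y)| ≤ ‖X‖ * ‖Y‖ := by
  refine abs_le_of_sq_le_sq ?_ (by positivity)
  have htrace : trace (X * Y) = ∑ p : m × n, X p.1 p.2 * Y p.2 p.1 := by
    simp [trace, mul_apply, Fintype.sum_prod_type]
  calc trace (X * Y) ^ 2
      ≤ (∑ p : m × n, X p.1 p.2 ^ 2) * ∑ p : m × n, Y p.2 p.1 ^ 2 := by
        rw [htrace]; exact Finset.sum_mul_sq_le_sq_mul_sq _ _ _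
    _ = (‖X‖ * ‖Y‖) ^ 2 := by
        rw [mul_pow, frobenius_norm_sq_eq_sum, frobenius_norm_sq_eq_sum, Fintype.sum_prod_type,
          Fintype.sum_prod_type, Finset.sum_comm (f := fun i j => Y j i ^ 2)]

theorem det_one_sub_ne_zero_of_norm_lt_one {𝕜 : Type*} [RCLike 𝕜] [DecidableEq n]
    {M : Matrix n n 𝕜} (h : ‖M‖ < 1) : (1 - M).det ≠ 0 :=
  ((isUnit_iff_isUnit_det _).mp (isUnit_one_sub_of_norm_lt_one h)).ne_zero

theorem det_one_sub_smul_mul_ne_zero [DecidableEq n] (A B : Matrix n n ℝ) {t : ℝ} (ht : 0 ≤ t)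
    (htAB : t * (‖A‖ * ‖B‖) < 1) : (1 - t • (A * B)).det ≠ 0 := by
  refine det_one_sub_ne_zero_of_norm_lt_one (lt_of_le_of_lt ?_ htAB)
  rw [norm_smul, Real.norm_of_nonneg ht]
  exact mul_le_mul_of_nonneg_left (norm_mul_le A B) ht

theorem abs_trace_mul_mul_inv_one_sub_smul_le [DecidableEq n] (A B : Matrix n n ℝ) {t : ℝ}
    (ht : 0 ≤ t) (htAB : t * (‖A‖ * ‖B‖) < 1) :
    |trace (A * B * (1 - t • (A * B))⁻¹)| ≤ ‖A‖ * ‖B‖ / (1 - t * (‖A‖ * ‖B‖)) := by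
  have hnorm : ‖t • A‖ * ‖B‖ = t * (‖A‖ * ‖B‖) := by
    rw [norm_smul, Real.norm_of_nonneg ht, mul_assoc]
  have hunit : IsUnit (1 - t • (A * B)).det :=
    isUnit_iff_ne_zero.mpr (det_one_sub_smul_mul_ne_zero A B ht htAB)
  have hBJ : ‖B * (1 - t • (A * B))⁻¹‖ ≤ ‖B‖ / (1 - t * (‖A‖ * ‖B‖)) := by
    refine hnorm ▸ norm_le_div_of_mul_one_sub_mul_eq (hnorm ▸ htAB) ?_
    rw [Matrix.mul_assoc, smul_mul_assoc, nonsing_inv_mul _ hunit, Matrix.mul_one]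
  calc |trace (A * B * (1 - t • (A * B))⁻¹)|
      ≤ ‖A‖ * ‖B * (1 - t • (A * B))⁻¹‖ := by
        rw [Matrix.mul_assoc]; exact abs_trace_mul_le _ _
    _ ≤ ‖A‖ * ‖B‖ / (1 - t * (‖A‖ * ‖B‖)) := by
        grw [hBJ, mul_div_assoc]

end Frobenius

end Matrix

theorem frobNorm_eq_norm {r : ℕ} (A : Matrix (Fin r) (Fin r) ℝ) : frobNorm A = ‖A‖ := by
  rw [frobNorm, ← Real.sqrt_sq (norm_nonneg A), Matrix.frobenius_norm_sq_eq_sum]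
  congr 1
  simp only [trace, diag_apply, mul_apply, transpose_apply, sq]
  exact Finset.sum_comm

/-- `|log det(I − AB)| ≤ (3/2)‖A‖_F‖B‖_F` when `‖A‖_F‖B‖_F < 1/2`. -/
theorem abs_log_det_one_sub_mul_le {r : ℕ}
    (A B : Matrix (Fin r) (Fin r) ℝ)
    (h : frobNorm A * frobNorm B < 1 / 2) :
    |Real.log ((1 - A * B).det)| ≤ 3 / 2 * (frobNorm A * frobNorm B) := by
  rw [frobNorm_eq_norm, frobNorm_eq_norm] at h ⊢
  set x := ‖A‖ * ‖B‖
  have hx0 : 0 ≤ x := by positivity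
  have hderiv_le : ∀ t ∈ Set.Ico (0 : ℝ) 1,
      ‖-trace (A * B * (1 - t • (A * B))⁻¹)‖ ≤ x + 2 * x ^ 2 * t := by
    intro t ht
    have htx : t * x < 1 / 2 := by nlinarith [ht.2]
    calc ‖-trace (A * B * (1 - t • (A * B))⁻¹)‖
        ≤ x / (1 - t * x) := by
          rw [norm_neg, Real.norm_eq_abs]
          exact abs_trace_mul_mul_inv_one_sub_smul_le A B ht.1 (by linarith)
      _ ≤ x + 2 * x ^ 2 * t := by
          rw [div_le_iff₀ (by linarith)]
          nlinarith [mul_nonneg (mul_nonneg ht.1 (sq_nonneg x)) (by linarith : 0 ≤ 1 - 2 * (t * x))]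
  have hL1 := norm_image_one_le_of_norm_deriv_le (f := fun s : ℝ => Real.log (1 - s • (A * B)).det)
    (by simp) (fun t ht => hasDerivAt_log_det_one_sub_smul _
      (det_one_sub_smul_mul_ne_zero A B ht.1 (by nlinarith [ht.2]))) hderiv_le
  rw [one_smul, Real.norm_eq_abs] at hL1
  nlinarith
end
end
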